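/- Let ψ be a real number with 0 < ψ ≤ 0.712, let n ≥ 1 be a real number, and let T be a natural number with T ≥ (1+ψ)·n. If α_l ≥ 1/((1+ψ)·n) for all l < T, then Y_T ≤ (γ + (2/(2+ψ))·β)·D, where β = (1-γ)/2. -/

import Mathlib

/-!
Writing `Y_t = γD + ρ_t`, the recursion becomes `ρ_{t+1} = (1 - α_t) ρ_t`, so
`ρ_T = (1 - γ) D ∏_{l<T} (1 - α_l)`. Since `1 - a ≤ exp (-a)`, the product is at most
`exp (-∑ α_l)`, and the learning-rate assumption makes `∑_{l<T} α_l ≥ T / ((1+ψ)n) ≥ 1`.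
Finally `exp (-1) ≤ 1 / (2 + ψ)` because `2 + ψ ≤ 2.712 < e`.
-/

open Finset Real

theorem sub_eq_mul_prod_of_affine_rec {R : Type*} [CommRing R] {a y : ℕ → R} {c : R}
    (hy : ∀ t, y (t + 1) = (1 - a t) * y t + a t * c) (t : ℕ) :
    y t - c = (y 0 - c) * ∏ l ∈ range t, (1 - a l) := by
  induction t with
  | zero => simp
  | succ t ih =>
    rw [hy, prod_range_succ, ← mul_assoc, ← ih]
    ring

theorem prod_one_sub_le_exp_neg_sum {ι : Type*} (s : Finset ι) {a : ι → ℝ}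
    (ha : ∀ i ∈ s, a i ≤ 1) :
    ∏ i ∈ s, (1 - a i) ≤ exp (-∑ i ∈ s, a i) := by
  rw [← sum_neg_distrib, exp_sum]
  refine prod_le_prod (fun i hi => sub_nonneg.mpr (ha i hi)) fun i _ => ?_
  linarith [add_one_le_exp (-a i)]

theorem exp_neg_one_le_one_div_two_add {ψ : ℝ} (hψ0 : -2 < ψ) (hψ1 : ψ ≤ 0.712) :
    exp (-1) ≤ 1 / (2 + ψ) := by
  rw [exp_neg, one_div]
  exact inv_anti₀ (by linarith) (by linarith [exp_one_gt_d9])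

theorem Y_bound_linear_rate_general (D γ : ℝ) (α : ℕ → ℝ) (Y : ℕ → ℝ)
    (hD : 0 < D) (hγ1 : γ < 1)
    (hα : ∀ t, 0 ≤ α t ∧ α t ≤ 1)
    (hY0 : Y 0 = D)
    (hYrec : ∀ t, Y (t + 1) = (1 - α t) * Y t + α t * γ * D)
    (ψ n : ℝ) (hψ0 : 0 < ψ) (hψ1 : ψ ≤ 0.712) (hn : 1 ≤ n)
    (T : ℕ) (hT : (T : ℝ) ≥ (1 + ψ) * n)
    (hrate : ∀ l < T, α l ≥ 1 / ((1 + ψ) * n)) :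
    Y T ≤ (γ + (2 / (2 + ψ)) * ((1 - γ) / 2)) * D := by
  have hm : 0 < (1 + ψ) * n := by nlinarith
  have hsum : 1 ≤ ∑ l ∈ range T, α l := calc
      1 ≤ T * (1 / ((1 + ψ) * n)) := by rwa [mul_one_div, le_div_iff₀ hm, one_mul]
      _ = ∑ _l ∈ range T, 1 / ((1 + ψ) * n) := by simp
      _ ≤ ∑ l ∈ range T, α l := sum_le_sum fun l hl => hrate l (mem_range.mp hl)
  have hprod : ∏ l ∈ range T, (1 - α l) ≤ 1 / (2 + ψ) := calc
      _ ≤ exp (-∑ l ∈ range T, α l) := prod_one_sub_le_exp_neg_sum _ fun l _ => (hα l).2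
      _ ≤ exp (-1) := exp_le_exp.mpr (neg_le_neg hsum)
      _ ≤ 1 / (2 + ψ) := exp_neg_one_le_one_div_two_add (by linarith) hψ1
  have hrec : ∀ t, Y (t + 1) = (1 - α t) * Y t + α t * (γ * D) := fun t => by
    rw [hYrec]; ring
  have hY := sub_eq_mul_prod_of_affine_rec hrec T
  rw [hY0] at hY
  have hρ := mul_le_mul_of_nonneg_left hprod (by nlinarith : 0 ≤ D - γ * D)
  calc Y T ≤ γ * D + (D - γ * D) * (1 / (2 + ψ)) := by linarith
    _ = (γ + (2 / (2 + ψ)) * ((1 - γ) / 2)) * D := by field_simp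

/-- Linear learning rate lemma (deterministic core): if `0 < ψ ≤ 0.712`,
`n ≥ 1`, `T ≥ (1+ψ)·n`, and `α_l ≥ 1/((1+ψ)·n)` for all `l < T`, then
`Y_T ≤ (γ + (2/(2+ψ))·β)·D` with `β = (1-γ)/2`. -/
theorem Y_bound_linear_rate (D γ : ℝ) (α : ℕ → ℝ) (Y : ℕ → ℝ)
    (hD : 0 < D) (hγ0 : 0 ≤ γ) (hγ1 : γ < 1)
    (hα : ∀ t, 0 ≤ α t ∧ α t ≤ 1)
    (hY0 : Y 0 = D)
    (hYrec : ∀ t, Y (t + 1) = (1 - α t) * Y t + α t * γ * D)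
    (ψ n : ℝ) (hψ0 : 0 < ψ) (hψ1 : ψ ≤ 0.712) (hn : 1 ≤ n)
    (T : ℕ) (hT : (T : ℝ) ≥ (1 + ψ) * n)
    (hrate : ∀ l < T, α l ≥ 1 / ((1 + ψ) * n)) :
    Y T ≤ (γ + (2 / (2 + ψ)) * ((1 - γ) / 2)) * D :=
  Y_bound_linear_rate_general D γ α Y hD hγ1 hα hY0 hYrec ψ n hψ0 hψ1 hn T hT hrate
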